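/- arXiv:1012.3323 — 5 statements merged into one kernel-verified Lean document; each statement's English description precedes it below -/
import Mathlib

section
/- Let ω ∈ ℝ \ {0} and μ₀ > 0 be constants, and let ε, σ : ℝ³ → ℝ be smooth with iωε(x) + σ(x) ≠ 0 for every x. Set k²(x) := μ₀ε(x)ω² − iμ₀ωσ(x), so that k² = −iμ₀ω(iωε+σ) never vanishes. Let J : ℝ³ → ℂ³ be smooth and let A : ℝ³ → ℂ³ be a smooth solution of the gauge-fixed vector-potential equation −ΔA − k²A + (∇·A)·(∇(k²))/k² = J. Define E := −iμ₀ωA + ∇((∇·A)/(iωε+σ)) and H := ∇×A. Then the pair (E,H) solves the frequency-domain Maxwell system with Ohm's law: ∇·H = 0, ∇×H = J + (iωε+σ)E, ∇×E = −iμ₀ωH, and moreover the charge-conservation constraint ∇·(J + (iωε+σ)E) = 0 holds. -/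
open scoped BigOperators

/-- Partial derivative in direction `s` of a complex-valued function on `ℝ³`. -/
noncomputable def pd (s : Fin 3) (f : (Fin 3 → ℝ) → ℂ) (x : Fin 3 → ℝ) : ℂ :=
  fderiv ℝ f x (Pi.single s 1)

/-- Divergence `∇·A` of a vector field `A : ℝ³ → ℂ³`. -/
noncomputable def vdiv (A : (Fin 3 → ℝ) → Fin 3 → ℂ) (x : Fin 3 → ℝ) : ℂ :=
  ∑ s : Fin 3, pd s (fun y => A y s) x

/-- Curl `∇×A` of a vector field `A : ℝ³ → ℂ³` (cyclic indices in `Fin 3`). -/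
noncomputable def vcurl (A : (Fin 3 → ℝ) → Fin 3 → ℂ) (x : Fin 3 → ℝ) : Fin 3 → ℂ :=
  fun i => pd (i + 1) (fun y => A y (i + 2)) x - pd (i + 2) (fun y => A y (i + 1)) x

/-- Gradient `∇f` of a scalar complex-valued function. -/
noncomputable def cgrad (f : (Fin 3 → ℝ) → ℂ) (x : Fin 3 → ℝ) : Fin 3 → ℂ :=
  fun s => pd s f x

/-- Componentwise Laplacian `ΔA` of a vector field `A : ℝ³ → ℂ³`. -/
noncomputable def vlap (A : (Fin 3 → ℝ) → Fin 3 → ℂ) (x : Fin 3 → ℝ) : Fin 3 → ℂ :=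
  fun t => ∑ s : Fin 3, pd s (fun y => pd s (fun z => A z t) y) x

/-! ### Auxiliary lemmas about `pd`. -/

theorem contDiff_pd {f : (Fin 3 → ℝ) → ℂ} (hf : ContDiff ℝ (⊤ : ℕ∞) f) (s : Fin 3) :
    ContDiff ℝ (⊤ : ℕ∞) (pd s f) :=
  (hf.fderiv_right (by simp)).clm_apply contDiff_const

theorem pd_add {f g : (Fin 3 → ℝ) → ℂ} {x} (s : Fin 3)
    (hf : DifferentiableAt ℝ f x) (hg : DifferentiableAt ℝ g x) :
    pd s (fun y => f y + g y) x = pd s f x + pd s g x := by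
  simp [pd, fderiv_fun_add hf hg]

theorem pd_sub {f g : (Fin 3 → ℝ) → ℂ} {x} (s : Fin 3)
    (hf : DifferentiableAt ℝ f x) (hg : DifferentiableAt ℝ g x) :
    pd s (fun y => f y - g y) x = pd s f x - pd s g x := by
  simp [pd, fderiv_fun_sub hf hg]

theorem pd_const_mul {f : (Fin 3 → ℝ) → ℂ} {x} (s : Fin 3) (c : ℂ)
    (hf : DifferentiableAt ℝ f x) :
    pd s (fun y => c * f y) x = c * pd s f x := by
  simp [pd, fderiv_const_mul hf c]

theorem pd_mul {f g : (Fin 3 → ℝ) → ℂ} {x} (s : Fin 3)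
    (hf : DifferentiableAt ℝ f x) (hg : DifferentiableAt ℝ g x) :
    pd s (fun y => f y * g y) x = f x * pd s g x + pd s f x * g x := by
  simp [pd, fderiv_fun_mul hf hg, mul_comm]

theorem pd_inv {g : (Fin 3 → ℝ) → ℂ} {x} (s : Fin 3)
    (hg : DifferentiableAt ℝ g x) (h0 : g x ≠ 0) :
    pd s (fun y => (g y)⁻¹) x = -pd s g x / (g x) ^ 2 := by
  have h := fderiv_comp (𝕜 := ℝ) x (differentiableAt_inv h0) hg
  have h2 : pd s (fun y => (g y)⁻¹) x
      = (fderiv ℝ (Inv.inv : ℂ → ℂ) (g x)) (fderiv ℝ g x (Pi.single s 1)) := by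
    rw [pd]; rw [show (fun y => (g y)⁻¹) = (Inv.inv : ℂ → ℂ) ∘ g from rfl, h]; rfl
  rw [h2, fderiv_inv' (𝕜 := ℝ) h0]
  simp [pd]
  rw [neg_div, div_eq_mul_inv, sq, mul_inv]
  ring

theorem pd_div {f g : (Fin 3 → ℝ) → ℂ} {x} (s : Fin 3)
    (hf : DifferentiableAt ℝ f x) (hg : DifferentiableAt ℝ g x) (h0 : g x ≠ 0) :
    pd s (fun y => f y / g y) x = (pd s f x * g x - f x * pd s g x) / (g x) ^ 2 := by
  have := pd_mul (g := fun y => (g y)⁻¹) s hf (hg.inv h0)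
  simp only [div_eq_mul_inv]
  rw [this, pd_inv s hg h0]
  field_simp
  ring

theorem pd_comm {f : (Fin 3 → ℝ) → ℂ} (hf : ContDiff ℝ (⊤ : ℕ∞) f) (s t : Fin 3) (x) :
    pd s (pd t f) x = pd t (pd s f) x := by
  have hd : DifferentiableAt ℝ (fderiv ℝ f) x :=
    ((hf.fderiv_right (m := (⊤ : ℕ∞)) (by simp)).differentiable (by simp)) x
  have h1 : ∀ u v : Fin 3, pd u (pd v f) x
      = fderiv ℝ (fderiv ℝ f) x (Pi.single u 1) (Pi.single v 1) := by
    intro u v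
    show fderiv ℝ (fun y => fderiv ℝ f y (Pi.single v 1)) x (Pi.single u 1) = _
    rw [fderiv_clm_apply hd (differentiableAt_const _)]
    simp
  rw [h1, h1]
  exact (hf.contDiffAt.isSymmSndFDerivAt (by norm_num; exact WithTop.coe_le_coe.mpr le_top)) _ _

theorem maxalg (D L F P a u v : ℂ) (h : v * u ≠ 0) :
    -L - v * u * a + F / (v * u) * P + u * (v * a + v * ((D * (v * u) - F * P) / (v * u) ^ 2))
      = D - L := by
  have hv : v ≠ 0 := left_ne_zero_of_mul h
  have hu : u ≠ 0 := right_ne_zero_of_mul h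
  field_simp
  ring

theorem sum3 (F : Fin 3 → ℂ) (t : Fin 3) : ∑ s : Fin 3, F s = F t + F (t + 1) + F (t + 2) := by
  fin_cases t <;> simp [Fin.sum_univ_three] <;> ring

theorem contDiff_vdiv {A} (hA : ContDiff ℝ (⊤ : ℕ∞) A) : ContDiff ℝ (⊤ : ℕ∞) (vdiv A) := by
  have : vdiv A = fun x => ∑ s : Fin 3, pd s (fun y => A y s) x := rfl
  rw [this]
  exact ContDiff.sum fun s _ => contDiff_pd (contDiff_pi.1 hA s) s

theorem contDiff_vcurl {A} (hA : ContDiff ℝ (⊤ : ℕ∞) A) : ContDiff ℝ (⊤ : ℕ∞) (vcurl A) := by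
  rw [contDiff_pi]
  intro i
  exact (contDiff_pd (contDiff_pi.1 hA (i + 2)) (i + 1)).sub
    (contDiff_pd (contDiff_pi.1 hA (i + 1)) (i + 2))

theorem vdiv_vcurl {A} (hA : ContDiff ℝ (⊤ : ℕ∞) A) (x) : vdiv (vcurl A) x = 0 := by
  have hAi := contDiff_pi.1 hA
  have hd : ∀ (s u : Fin 3) (y), DifferentiableAt ℝ (pd s (fun z => A z u)) y :=
    fun s u y => ((contDiff_pd (hAi u) s).differentiable (by simp)) y
  have e : vdiv (vcurl A) x = ∑ i : Fin 3,
      pd i (fun y => pd (i + 1) (fun z => A z (i + 2)) y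
        - pd (i + 2) (fun z => A z (i + 1)) y) x := rfl
  rw [e, Fin.sum_univ_three]
  simp only [show ((0 : Fin 3) + 1) = 1 from rfl, show ((0 : Fin 3) + 2) = 2 from rfl,
    show ((1 : Fin 3) + 1) = 2 from rfl, show ((1 : Fin 3) + 2) = 0 by decide,
    show ((2 : Fin 3) + 1) = 0 by decide, show ((2 : Fin 3) + 2) = 1 by decide]
  rw [pd_sub _ (hd _ _ _) (hd _ _ _), pd_sub _ (hd _ _ _) (hd _ _ _),
    pd_sub _ (hd _ _ _) (hd _ _ _)]
  rw [pd_comm (hAi 2) 1 0 x, pd_comm (hAi 1) 2 0 x, pd_comm (hAi 0) 2 1 x]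
  ring

theorem vcurl_vcurl {A} (hA : ContDiff ℝ (⊤ : ℕ∞) A) (x) (t : Fin 3) :
    vcurl (vcurl A) x t = pd t (vdiv A) x - vlap A x t := by
  have hAi := contDiff_pi.1 hA
  have hd : ∀ (s u : Fin 3) (y), DifferentiableAt ℝ (pd s (fun z => A z u)) y :=
    fun s u y => ((contDiff_pd (hAi u) s).differentiable (by simp)) y
  have e1 : ∀ u : Fin 3, u + 1 + 1 = u + 2 := by decide
  have e2 : ∀ u : Fin 3, u + 1 + 2 = u := by decide
  have e3 : ∀ u : Fin 3, u + 2 + 1 = u := by decide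
  have e4 : ∀ u : Fin 3, u + 2 + 2 = u + 1 := by decide
  have e : vcurl (vcurl A) x t
      = pd (t + 1) (fun y => pd (t + 2 + 1) (fun z => A z (t + 2 + 2)) y
          - pd (t + 2 + 2) (fun z => A z (t + 2 + 1)) y) x
      - pd (t + 2) (fun y => pd (t + 1 + 1) (fun z => A z (t + 1 + 2)) y
          - pd (t + 1 + 2) (fun z => A z (t + 1 + 1)) y) x := rfl
  rw [e]
  simp only [e1, e2, e3, e4]
  rw [pd_sub _ (hd _ _ _) (hd _ _ _), pd_sub _ (hd _ _ _) (hd _ _ _)]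
  have hv : vdiv A = fun y => pd t (fun z => A z t) y
      + (pd (t + 1) (fun z => A z (t + 1)) y + pd (t + 2) (fun z => A z (t + 2)) y) := by
    funext y
    rw [show vdiv A y = ∑ s : Fin 3, pd s (fun z => A z s) y from rfl, sum3 _ t, add_assoc]
  rw [hv, pd_add (g := fun y => pd (t + 1) (fun z => A z (t + 1)) y + pd (t + 2) (fun z => A z (t + 2)) y) _ (hd _ _ _) ((hd _ _ _).add (hd _ _ _)), pd_add _ (hd _ _ _) (hd _ _ _)]
  have hl : vlap A x t = ∑ s : Fin 3, pd s (pd s (fun z => A z t)) x := rfl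
  rw [hl, sum3 _ t]
  rw [pd_comm (hAi (t + 1)) (t + 1) t x, pd_comm (hAi (t + 2)) (t + 2) t x]
  ring

/-- A smooth solution of the gauge-fixed vector-potential equation
`−ΔA − k²A + (∇·A)·∇(k²)/k² = J` yields, via `E := −iμ₀ωA + ∇((∇·A)/(iωε+σ))` and
`H := ∇×A`, a solution of the frequency-domain Maxwell system with Ohm's law, together
with the charge-conservation constraint; moreover `k²` never vanishes. -/
theorem maxwell_from_gauge_fixed_vector_potential
    (ω μ₀ : ℝ) (hω : ω ≠ 0) (hμ : 0 < μ₀)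
    (ε σ : (Fin 3 → ℝ) → ℝ)
    (hε : ContDiff ℝ (⊤ : ℕ∞) ε) (hσ : ContDiff ℝ (⊤ : ℕ∞) σ)
    (hns : ∀ x, Complex.I * (ω : ℂ) * (ε x : ℂ) + (σ x : ℂ) ≠ 0)
    (k2 : (Fin 3 → ℝ) → ℂ)
    (hk2 : ∀ x, k2 x = (μ₀ : ℂ) * (ε x : ℂ) * (ω : ℂ) ^ 2
        - Complex.I * (μ₀ : ℂ) * (ω : ℂ) * (σ x : ℂ))
    (J A : (Fin 3 → ℝ) → Fin 3 → ℂ)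
    (hJ : ContDiff ℝ (⊤ : ℕ∞) J) (hA : ContDiff ℝ (⊤ : ℕ∞) A)
    (heq : ∀ x, -vlap A x - k2 x • A x + (vdiv A x / k2 x) • cgrad k2 x = J x)
    (E H : (Fin 3 → ℝ) → Fin 3 → ℂ)
    (hE : ∀ x, E x = -(Complex.I * (μ₀ : ℂ) * (ω : ℂ)) • A x
        + cgrad (fun y => vdiv A y / (Complex.I * (ω : ℂ) * (ε y : ℂ) + (σ y : ℂ))) x)
    (hH : ∀ x, H x = vcurl A x) :
    (∀ x, k2 x ≠ 0) ∧
    (∀ x, vdiv H x = 0) ∧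
    (∀ x, vcurl H x = J x + (Complex.I * (ω : ℂ) * (ε x : ℂ) + (σ x : ℂ)) • E x) ∧
    (∀ x, vcurl E x = -(Complex.I * (μ₀ : ℂ) * (ω : ℂ)) • H x) ∧
    (∀ x, vdiv (fun y => J y + (Complex.I * (ω : ℂ) * (ε y : ℂ) + (σ y : ℂ)) • E y) x = 0) := by
  obtain rfl : H = vcurl A := funext hH
  set c : ℂ := -(Complex.I * (μ₀ : ℂ) * (ω : ℂ)) with hcdef
  set α : (Fin 3 → ℝ) → ℂ := fun y => Complex.I * (ω : ℂ) * (ε y : ℂ) + (σ y : ℂ) with hαdef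
  have hc : c ≠ 0 := by
    rw [hcdef]
    apply neg_ne_zero.mpr
    exact mul_ne_zero (mul_ne_zero Complex.I_ne_zero
      (Complex.ofReal_ne_zero.mpr hμ.ne')) (Complex.ofReal_ne_zero.mpr hω)
  have hk2α : ∀ y, k2 y = c * α y := by
    intro y
    rw [hk2 y, hcdef, hαdef]
    linear_combination ((μ₀ : ℂ) * (ε y : ℂ) * (ω : ℂ) ^ 2) * Complex.I_sq
  have hk2ne : ∀ y, k2 y ≠ 0 := fun y => by
    rw [hk2α y]; exact mul_ne_zero hc (hns y)
  -- smoothness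
  have hεc : ContDiff ℝ (⊤ : ℕ∞) (fun y => ((ε y : ℂ))) := Complex.ofRealCLM.contDiff.comp hε
  have hσc : ContDiff ℝ (⊤ : ℕ∞) (fun y => ((σ y : ℂ))) := Complex.ofRealCLM.contDiff.comp hσ
  have hαs : ContDiff ℝ (⊤ : ℕ∞) α := (contDiff_const.mul hεc).add hσc
  have hk2s : ContDiff ℝ (⊤ : ℕ∞) k2 := by
    have : k2 = fun y => (μ₀ : ℂ) * (ε y : ℂ) * (ω : ℂ) ^ 2
        - Complex.I * (μ₀ : ℂ) * (ω : ℂ) * (σ y : ℂ) := funext hk2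
    rw [this]
    exact ((contDiff_const.mul hεc).mul contDiff_const).sub (contDiff_const.mul hσc)
  have hfs : ContDiff ℝ (⊤ : ℕ∞) (vdiv A) := contDiff_vdiv hA
  set g : (Fin 3 → ℝ) → ℂ := fun y => vdiv A y / k2 y with hgdef
  have hgs : ContDiff ℝ (⊤ : ℕ∞) g := by
    rw [hgdef]; simp only [div_eq_mul_inv]; exact hfs.mul (hk2s.inv hk2ne)
  have hAi := contDiff_pi.1 hA
  have hdA : ∀ (u : Fin 3) (y), DifferentiableAt ℝ (fun z => A z u) y :=
    fun u y => ((hAi u).differentiable (by simp)) y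
  have hdg : ∀ y, DifferentiableAt ℝ g y := fun y => (hgs.differentiable (by simp)) y
  have hdpdg : ∀ (s : Fin 3) (y), DifferentiableAt ℝ (pd s g) y :=
    fun s y => ((contDiff_pd hgs s).differentiable (by simp)) y
  have hdf : ∀ y, DifferentiableAt ℝ (vdiv A) y := fun y => (hfs.differentiable (by simp)) y
  have hdk2 : ∀ y, DifferentiableAt ℝ k2 y := fun y => (hk2s.differentiable (by simp)) y
  -- key component formula for E
  have hEt : ∀ x t, E x t = c * A x t + c * pd t g x := by
    intro x t
    have h1 : (fun y => vdiv A y / (Complex.I * (ω : ℂ) * (ε y : ℂ) + (σ y : ℂ)))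
        = fun y => c * g y := by
      funext y
      rw [hgdef]
      show vdiv A y / α y = c * (vdiv A y / k2 y)
      rw [hk2α y, mul_div_assoc', mul_div_mul_left _ _ hc]
    rw [hE x, h1]
    show c * A x t + pd t (fun y => c * g y) x = _
    rw [pd_const_mul t c (hdg x)]
  -- the heq component identity
  have hJt : ∀ x (t : Fin 3), J x t
      = -vlap A x t - k2 x * A x t + (vdiv A x / k2 x) * pd t k2 x := by
    intro x t
    have := congrFun (heq x) t
    simpa [Pi.add_apply, Pi.sub_apply, Pi.neg_apply, Pi.smul_apply, smul_eq_mul,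
      cgrad] using this.symm
  have hAmp : ∀ x, vcurl (vcurl A) x
      = J x + (Complex.I * (ω : ℂ) * (ε x : ℂ) + (σ x : ℂ)) • E x := by
    intro x
    funext t
    rw [vcurl_vcurl hA x t]
    simp only [Pi.add_apply, Pi.smul_apply, smul_eq_mul]
    rw [hJt x t, hEt x t]
    rw [show pd t g x = (pd t (vdiv A) x * k2 x - vdiv A x * pd t k2 x) / (k2 x) ^ 2 from
      pd_div t (hdf x) (hdk2 x) (hk2ne x)]
    rw [hk2α x]
    refine (maxalg (pd t (vdiv A) x) (vlap A x t) (vdiv A x) (pd t k2 x) (A x t)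
      (Complex.I * (ω : ℂ) * (ε x : ℂ) + (σ x : ℂ)) c ?_).symm
    have h := hk2ne x
    rw [hk2α x] at h
    exact h
  refine ⟨hk2ne, fun x => vdiv_vcurl hA x, hAmp, ?_, ?_⟩
  · -- Faraday's law
    intro x
    have hE'' : E = fun y t => c * A y t + c * pd t g y := by
      funext y t; exact hEt y t
    funext i
    rw [hE'']
    have e : vcurl (fun y t => c * A y t + c * pd t g y) x i
        = pd (i + 1) (fun y => c * A y (i + 2) + c * pd (i + 2) g y) x
          - pd (i + 2) (fun y => c * A y (i + 1) + c * pd (i + 1) g y) x := rfl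
    rw [e, pd_add _ ((hdA _ _).const_mul c) ((hdpdg _ _).const_mul c),
      pd_add _ ((hdA _ _).const_mul c) ((hdpdg _ _).const_mul c),
      pd_const_mul _ c (hdA _ _), pd_const_mul _ c (hdpdg _ _),
      pd_const_mul _ c (hdA _ _), pd_const_mul _ c (hdpdg _ _),
      pd_comm hgs (i + 1) (i + 2) x]
    simp only [Pi.smul_apply, smul_eq_mul]
    show _ = c * (pd (i + 1) (fun y => A y (i + 2)) x - pd (i + 2) (fun y => A y (i + 1)) x)
    ring
  · -- charge conservation
    intro x
    have h5 : (fun y => J y + (Complex.I * (ω : ℂ) * (ε y : ℂ) + (σ y : ℂ)) • E y)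
        = vcurl (vcurl A) := funext fun y => (hAmp y).symm
    rw [h5]
    exact vdiv_vcurl (contDiff_vcurl hA) x
end

section
/- Let A be an associative unital algebra over ℂ and z ∈ ℂ. Let H₀, W_T, W_M, W_R, J_T, J_M, J_R, χ_T, χ_R ∈ A, and let R_T, R_M, R_R ∈ A be right inverses: (H₀+W_T−z)R_T = 1, (H₀+W_M−z)R_M = 1, (H₀+W_R−z)R_R = 1. Assume the commutation relations W_T J_T = J_T W_T, W_M J_M = J_M W_M, W_R J_R = J_R W_R; the cross-support relations W_M J_T = W_R J_T = 0, W_T J_M = W_R J_M = 0, W_T J_R = W_M J_R = 0; and the partition identity J_T χ_T + J_M (1−χ_T−χ_R) + J_R χ_R = 1. Define S := J_T R_T χ_T + J_M R_M (1−χ_T−χ_R) + J_R R_R χ_R, and K_T := [H₀, J_T] R_T χ_T, K_M := [H₀, J_M] R_M (1−χ_T−χ_R), K_R := [H₀, J_R] R_R χ_R, where [a,b] := ab − ba. Then (H₀ + W_T + W_M + W_R − z)·S = 1 + K_T + K_M + K_R. -/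
/-- Auxiliary: action of the full operator on one parametrix piece. -/
lemma parametrix_piece {A : Type*} [Ring A] (c H0 Wtot W J R χ' : A)
    (hW : Wtot * J = J * W) (hc : c * J = J * c)
    (hR : (H0 + W - c) * R = 1) :
    (H0 + Wtot - c) * (J * R * χ') = J * χ' + (H0 * J - J * H0) * R * χ' := by
  have key : (H0 + Wtot - c) * J = J * (H0 + W - c) + (H0 * J - J * H0) := by
    rw [sub_mul, add_mul, hW, hc]
    noncomm_ring
  calc (H0 + Wtot - c) * (J * R * χ')
      = ((H0 + Wtot - c) * J) * (R * χ') := by noncomm_ring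
    _ = (J * (H0 + W - c) + (H0 * J - J * H0)) * (R * χ') := by rw [key]
    _ = J * ((H0 + W - c) * R) * χ' + (H0 * J - J * H0) * R * χ' := by noncomm_ring
    _ = J * χ' + (H0 * J - J * H0) * R * χ' := by rw [hR, mul_one]

/-- The geometric parametrix identity
`(H₀ + W_T + W_M + W_R − z)·S = 1 + K_T + K_M + K_R` in an associative
unital ℂ-algebra, under the commutation / cross-support / partition hypotheses. -/
theorem parametrix_identity
    {A : Type*} [Ring A] [Algebra ℂ A] (z : ℂ)
    (H0 WT WM WR JT JM JR χT χR RT RM RR : A)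
    (hRT : (H0 + WT - algebraMap ℂ A z) * RT = 1)
    (hRM : (H0 + WM - algebraMap ℂ A z) * RM = 1)
    (hRR : (H0 + WR - algebraMap ℂ A z) * RR = 1)
    (hcT : WT * JT = JT * WT) (hcM : WM * JM = JM * WM) (hcR : WR * JR = JR * WR)
    (h1 : WM * JT = 0) (h2 : WR * JT = 0)
    (h3 : WT * JM = 0) (h4 : WR * JM = 0)
    (h5 : WT * JR = 0) (h6 : WM * JR = 0)
    (hpart : JT * χT + JM * (1 - χT - χR) + JR * χR = 1)
    (S KT KM KR : A)
    (hS : S = JT * RT * χT + JM * RM * (1 - χT - χR) + JR * RR * χR)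
    (hKT : KT = (H0 * JT - JT * H0) * RT * χT)
    (hKM : KM = (H0 * JM - JM * H0) * RM * (1 - χT - χR))
    (hKR : KR = (H0 * JR - JR * H0) * RR * χR) :
    (H0 + WT + WM + WR - algebraMap ℂ A z) * S = 1 + KT + KM + KR := by
  set c := algebraMap ℂ A z with hcdef
  set Wtot := WT + WM + WR with hWtot
  have hEq : H0 + WT + WM + WR - c = H0 + Wtot - c := by rw [hWtot]; noncomm_ring
  have hT : (H0 + Wtot - c) * (JT * RT * χT)
      = JT * χT + (H0 * JT - JT * H0) * RT * χT :=
    parametrix_piece c H0 Wtot WT JT RT χT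
      (by rw [hWtot, add_mul, add_mul, h1, h2, hcT, add_zero, add_zero])
      (Algebra.commutes z JT) hRT
  have hM : (H0 + Wtot - c) * (JM * RM * (1 - χT - χR))
      = JM * (1 - χT - χR) + (H0 * JM - JM * H0) * RM * (1 - χT - χR) :=
    parametrix_piece c H0 Wtot WM JM RM (1 - χT - χR)
      (by rw [hWtot, add_mul, add_mul, h3, h4, hcM, zero_add, add_zero])
      (Algebra.commutes z JM) hRM
  have hR : (H0 + Wtot - c) * (JR * RR * χR)
      = JR * χR + (H0 * JR - JR * H0) * RR * χR :=
    parametrix_piece c H0 Wtot WR JR RR χR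
      (by rw [hWtot, add_mul, add_mul, h5, h6, hcR, zero_add, zero_add])
      (Algebra.commutes z JR) hRR
  conv_rhs => rw [← hpart, hKT, hKM, hKR]
  rw [hS, hEq, mul_add, mul_add, hT, hM, hR]
  abel
end

section
/- (Lemma 1, abstract form of the exact decoupling formula.) Let A be a unital ring and let G, S, S̃, K_T, K_M, K_R, K̃_T, K̃_M, K̃_R, χ_T, χ_{T_a}, χ_{R_a}, P ∈ A satisfy: (i) G = S − G·(K_T + K_M + K_R); (ii) G = S̃ − (K̃_T + K̃_M + K̃_R)·G; (iii) K_M·χ_T = 0 and K_R·χ_T = 0; (iv) P·S·χ_T = 0 and P·S̃·K_T·χ_T = 0; (v) P·K̃_T = 0 and P·K̃_M = 0; (vi) K̃_R = K̃_R·χ_{R_a} and K_T·χ_T = χ_{T_a}·K_T·χ_T. Then P·G·χ_T = P·K̃_R·(χ_{R_a}·G·χ_{T_a})·K_T·χ_T. -/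
/-- **Lemma 1, abstract form.** The exact "almost decoupled" formula
`P·G·χ_T = P·K̃_R·(χ_{R_a}·G·χ_{T_a})·K_T·χ_T` under the algebraic encoding of the
disjoint-support properties used in the paper. -/
theorem lemma1_decoupling
    {A : Type*} [Ring A]
    (G S St KT KM KR KtT KtM KtR χT χTa χRa P : A)
    (h1 : G = S - G * (KT + KM + KR))
    (h2 : G = St - (KtT + KtM + KtR) * G)
    (h3 : KM * χT = 0) (h4 : KR * χT = 0)
    (h5 : P * S * χT = 0) (h6 : P * St * KT * χT = 0)
    (h7 : P * KtT = 0) (h8 : P * KtM = 0)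
    (h9 : KtR = KtR * χRa) (h10 : KT * χT = χTa * KT * χT) :
    P * G * χT = P * KtR * (χRa * G * χTa) * KT * χT := by
  have eG : G * χT = S * χT - G * (KT * χT) := by
    conv_lhs => rw [h1]
    rw [sub_mul, mul_assoc, add_mul, add_mul, h3, h4, add_zero, add_zero]
  have ePG : P * G = P * St - P * KtR * G := by
    conv_lhs => rw [h2]
    rw [mul_sub, add_mul, add_mul, mul_add, mul_add, ← mul_assoc, ← mul_assoc,
      ← mul_assoc, h7, h8]
    simp
    
  calc P * G * χT = P * (G * χT) := by rw [mul_assoc]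
    _ = - (P * G * (KT * χT)) := by
        rw [eG, mul_sub, ← mul_assoc, ← mul_assoc, h5, zero_sub, mul_assoc]
    _ = P * KtR * G * (KT * χT) := by
        have : P * St * (KT * χT) = 0 := by rw [← mul_assoc, h6]
        rw [ePG, sub_mul, this, zero_sub, neg_neg]
    _ = P * KtR * (χRa * G * χTa) * KT * χT := by
        conv_lhs => rw [h9, h10]
        noncomm_ring
end

section
/- Let A be a unital ring, N ≥ 1, and R, R₀ ∈ A, W_n, χ_n ∈ A for n ∈ {1,…,N}, with χ_n·W_n = W_n for all n and R = R₀ − Σ_{n=1}^{N} R₀·W_n·R. Form the N×N matrix M over A with entries M_{nm} := W_n·R₀·χ_m. If Id + M is invertible in the ring of N×N matrices over A, with inverse having entries B_{nm}, then R = R₀ − Σ_{n=1}^{N} Σ_{m=1}^{N} R₀·χ_n·B_{nm}·W_m·R₀. -/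
/-! Put `u_n := W_n R` and `v_n := W_n R₀`. Multiplying the resolvent identity by `W_n` on the left
and inserting `χ_m W_m = W_m` shows that `u` solves the finite linear system `(1 + M) u = v` over `A`,
so the left inverse `B` of `1 + M` gives `u = B v`. Substituting `W_n R = Σ_m B_{nm} W_m R₀` into
`R = R₀ − Σ_n R₀ χ_n (W_n R)` gives the formula. -/

open Matrix Finset

section
variable {ι A : Type*} [Fintype ι] [Ring A] {R R₀ : A} {W χ : ι → A}

theorem resolvent_eq_sub_sum_localized (hχW : ∀ n, χ n * W n = W n)
    (hR : R = R₀ - ∑ n, R₀ * W n * R) :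
    R = R₀ - ∑ n, R₀ * χ n * (W n * R) := by
  conv_lhs => rw [hR]
  simp only [mul_assoc, ← mul_assoc (χ _), hχW]

theorem one_add_mulVec_eq_of_resolvent_identity [DecidableEq ι]
    (hχW : ∀ n, χ n * W n = W n) (hR : R = R₀ - ∑ n, R₀ * W n * R)
    {M : Matrix ι ι A} (hM : ∀ n m, M n m = W n * R₀ * χ m) :
    (1 + M) *ᵥ (fun n => W n * R) = fun n => W n * R₀ := by
  funext n
  have hMu : (M *ᵥ fun m => W m * R) n = W n * (R₀ - R) := by
    calc (M *ᵥ fun m => W m * R) n = W n * ∑ m, R₀ * W m * R := by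
          simp only [mulVec, dotProduct, hM, mul_sum, mul_assoc, ← mul_assoc (χ _), hχW]
      _ = W n * (R₀ - R) := by conv_rhs => rw [hR, sub_sub_cancel]
  rw [add_mulVec, one_mulVec, Pi.add_apply, hMu, ← mul_add, add_sub_cancel]

end

theorem lippmann_schwinger_N_scatterers_general
    {A : Type*} [Ring A] (N : ℕ)
    (R R₀ : A) (W χ : Fin N → A)
    (hχW : ∀ n, χ n * W n = W n)
    (hR : R = R₀ - ∑ n : Fin N, R₀ * W n * R)
    (M Bm : Matrix (Fin N) (Fin N) A)
    (hM : ∀ n m, M n m = W n * R₀ * χ m)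
    (hB2 : Bm * (1 + M) = 1) :
    R = R₀ - ∑ n : Fin N, ∑ m : Fin N, R₀ * χ n * Bm n m * W m * R₀ := by
  have hu : (fun n => W n * R) = Bm *ᵥ fun n => W n * R₀ := by
    rw [← one_add_mulVec_eq_of_resolvent_identity hχW hR hM, mulVec_mulVec, hB2, one_mulVec]
  calc R = R₀ - ∑ n, R₀ * χ n * (W n * R) := resolvent_eq_sub_sum_localized hχW hR
    _ = R₀ - ∑ n, ∑ m, R₀ * χ n * Bm n m * W m * R₀ := by
      simp only [congrFun hu, mulVec, dotProduct, mul_sum, mul_assoc]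

/-- N-scatterer Lippmann–Schwinger representation: from the second
resolvent identity `R = R₀ − Σ_n R₀·W_n·R`, `χ_n·W_n = W_n`, and invertibility of the
`N×N` block matrix `Id + M` (with `M_{nm} = W_n·R₀·χ_m`) with inverse entries `B_{nm}`,
one gets `R = R₀ − Σ_{n,m} R₀·χ_n·B_{nm}·W_m·R₀`. -/
theorem lippmann_schwinger_N_scatterers
    {A : Type*} [Ring A] (N : ℕ) (hN : 1 ≤ N)
    (R R₀ : A) (W χ : Fin N → A)
    (hχW : ∀ n, χ n * W n = W n)
    (hR : R = R₀ - ∑ n : Fin N, R₀ * W n * R)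
    (M Bm : Matrix (Fin N) (Fin N) A)
    (hM : ∀ n m, M n m = W n * R₀ * χ m)
    (hB1 : (1 + M) * Bm = 1) (hB2 : Bm * (1 + M) = 1) :
    R = R₀ - ∑ n : Fin N, ∑ m : Fin N, R₀ * χ n * Bm n m * W m * R₀ :=
  lippmann_schwinger_N_scatterers_general N R R₀ W χ hχW hR M Bm hM hB2
end

section
/- Let k ∈ ℝ, let u ∈ ℝ³ with ‖u‖ = 1, let r > 0, and let y ∈ ℝ³ with ‖y‖ ≥ 2r. Then | e^{i k ‖y − r·u‖}/(4π‖y − r·u‖) − e^{i k ‖y‖}·e^{−i k r ⟨u, y⟩/‖y‖}/(4π‖y‖) | ≤ (4|k|r² + 2r) / (4π‖y‖²). -/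
/-!
Write `a = ‖y - r • u‖`, `b = ‖y‖` and `d = b - r ⟪u, y⟫ / b` for the linearised
distance. Since `a² - d² = r² (1 - ⟪u, y⟫² / b²) ∈ [0, r²]` and `a + d ≥ b`, the phase
error is `|a - d| ≤ r² / b`, while `|a - b| ≤ r` and `a ≥ b / 2` bound the amplitude error
`|1/a - 1/b| ≤ 2r / b²`. Splitting
`e^{ika}/a - e^{ikd}/b = e^{ika} (1/a - 1/b) + (e^{ika} - e^{ikd})/b`
and using `|e^{is} - e^{it}| ≤ |s - t|` bounds the difference by `(|k| r² + 2r) / (4π b²)`.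
-/

open scoped RealInnerProductSpace

namespace Complex

theorem norm_exp_I_mul_ofReal_sub_exp_I_mul_ofReal_le (s t : ℝ) :
    ‖exp (I * s) - exp (I * t)‖ ≤ |s - t| := by
  have hfactor : exp (I * s) - exp (I * t) = exp (I * t) * (exp (I * ↑(s - t)) - 1) := by
    rw [mul_sub, mul_one, ← exp_add]
    push_cast
    ring_nf
  rw [hfactor, norm_mul, norm_exp_I_mul_ofReal, one_mul, ← Real.norm_eq_abs]
  exact Real.norm_exp_I_mul_ofReal_sub_one_le

theorem norm_exp_I_mul_ofReal_div_sub_le (s t a b : ℝ) (ha : 0 < a) (hb : 0 < b) :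
    ‖exp (I * s) / a - exp (I * t) / b‖ ≤ |s - t| / b + |b - a| / (a * b) := by
  have hsplit : exp (I * s) / a - exp (I * t) / b
      = (exp (I * s) - exp (I * t)) / b + exp (I * s) * ↑((b - a) / (a * b)) := by
    have : (a : ℂ) ≠ 0 := ofReal_ne_zero.mpr ha.ne'
    have : (b : ℂ) ≠ 0 := ofReal_ne_zero.mpr hb.ne'
    push_cast
    field_simp
    ring
  calc ‖exp (I * s) / a - exp (I * t) / b‖
      ≤ ‖exp (I * s) - exp (I * t)‖ / b + |b - a| / (a * b) := by
        rw [hsplit]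
        refine (norm_add_le _ _).trans_eq ?_
        rw [norm_div, norm_mul, norm_exp_I_mul_ofReal, one_mul, norm_real, norm_real,
          Real.norm_of_nonneg hb.le, Real.norm_eq_abs, abs_div, abs_of_pos (mul_pos ha hb)]
    _ ≤ |s - t| / b + |b - a| / (a * b) := by
        gcongr
        exact norm_exp_I_mul_ofReal_sub_exp_I_mul_ofReal_le s t

end Complex

open Complex in
theorem norm_exp_div_sub_exp_div_le_of_abs_sub_le (k a b d r : ℝ) (hb : 0 < b) (ha : b / 2 ≤ a)
    (hba : |b - a| ≤ r) (had : |a - d| ≤ r ^ 2 / b) :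
    ‖exp (I * k * a) / (4 * Real.pi * a) - exp (I * k * d) / (4 * Real.pi * b)‖
      ≤ (|k| * r ^ 2 + 2 * r) / (4 * Real.pi * b ^ 2) := by
  have ha0 : 0 < a := by linarith
  have hphase_bound : |k * a - k * d| / b ≤ |k| * r ^ 2 / b ^ 2 := by
    calc |k * a - k * d| / b = |k| * (|a - d| / b) := by rw [← mul_sub, abs_mul, mul_div_assoc]
      _ ≤ |k| * (r ^ 2 / b / b) := by gcongr
      _ = |k| * r ^ 2 / b ^ 2 := by ring
  have hamplitude_bound : |b - a| / (a * b) ≤ 2 * r / b ^ 2 := by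
    rw [div_le_div_iff₀ (by positivity) (by positivity)]
    nlinarith [mul_le_mul_of_nonneg_right hba (sq_nonneg b),
      mul_nonneg (mul_nonneg ((abs_nonneg _).trans hba) hb.le) (by linarith : 0 ≤ 2 * a - b)]
  have hfactor : ∀ (z : ℂ) (ρ : ℝ), z / (4 * Real.pi * ρ) = z / ρ / ↑(4 * Real.pi) := by
    intro z ρ; push_cast; ring
  simp only [hfactor, mul_assoc I, ← ofReal_mul]
  rw [← sub_div, norm_div, norm_real, Real.norm_of_nonneg (by positivity), mul_comm _ (b ^ 2),
    ← div_div (|k| * r ^ 2 + 2 * r), div_le_div_iff_of_pos_right (by positivity), add_div]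
  calc _ ≤ |k * a - k * d| / b + |b - a| / (a * b) :=
        norm_exp_I_mul_ofReal_div_sub_le _ _ a b ha0 hb
    _ ≤ |k| * r ^ 2 / b ^ 2 + 2 * r / b ^ 2 := add_le_add hphase_bound hamplitude_bound

theorem abs_norm_sub_norm_sub_smul_le {E : Type*} [SeminormedAddCommGroup E]
    [NormedSpace ℝ E] {u : E} (hu : ‖u‖ = 1) {r : ℝ} (hr : 0 ≤ r) (y : E) :
    |‖y‖ - ‖y - r • u‖| ≤ r := by
  simpa [norm_smul_of_nonneg hr, hu] using abs_norm_sub_norm_le y (y - r • u)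

theorem abs_norm_sub_smul_sub_linear_approx_le {E : Type*} [SeminormedAddCommGroup E]
    [InnerProductSpace ℝ E] {u y : E} (hu : ‖u‖ = 1) {r : ℝ} (hr : 0 < r)
    (hy : 2 * r ≤ ‖y‖) :
    |‖y - r • u‖ - (‖y‖ - r * (⟪u, y⟫ / ‖y‖))| ≤ r ^ 2 / ‖y‖ := by
  have hb : 0 < ‖y‖ := by linarith
  set c := ⟪u, y⟫ / ‖y‖ with hc
  have hc_abs : |c| ≤ 1 := by simpa [hu] using abs_real_inner_div_norm_mul_norm_le_one u y
  have hc_sq : c ^ 2 ≤ 1 := sq_abs c ▸ pow_le_one₀ (abs_nonneg c) hc_abs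
  have hinner : ⟪u, y⟫ = ‖y‖ * c := by rw [hc]; field_simp
  have ha_sq : ‖y - r • u‖ ^ 2 = ‖y‖ ^ 2 - 2 * r * ⟪u, y⟫ + r ^ 2 := by
    rw [norm_sub_sq_real, real_inner_smul_right, real_inner_comm, norm_smul_of_nonneg hr.le, hu]
    ring
  have ha : ‖y‖ - r ≤ ‖y - r • u‖ := by
    linarith [abs_le.mp (abs_norm_sub_norm_sub_smul_le hu hr.le y)]
  have hd : ‖y‖ - r ≤ ‖y‖ - r * c := by nlinarith [abs_le.mp hc_abs]
  set a := ‖y - r • u‖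
  set d := ‖y‖ - r * c
  have hdiff_sq : |a - d| * (a + d) ≤ r ^ 2 := by
    have hprod : (a - d) * (a + d) = r ^ 2 * (1 - c ^ 2) := by
      rw [(by ring : (a - d) * (a + d) = a ^ 2 - d ^ 2), ha_sq, hinner]; ring
    rw [← abs_of_pos (by linarith : 0 < a + d), ← abs_mul, hprod, abs_mul,
      abs_of_nonneg (by positivity), abs_of_nonneg (by linarith)]
    nlinarith
  rw [le_div_iff₀ hb]
  nlinarith [abs_nonneg (a - d)]

/-- Quantitative far-field approximation of the free Helmholtz
Green function: for a unit vector `u`, `r > 0` and `‖y‖ ≥ 2r`,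
`| e^{ik‖y−ru‖}/(4π‖y−ru‖) − e^{ik‖y‖} e^{−ikr⟨u,y⟩/‖y‖}/(4π‖y‖) |
  ≤ (4|k|r² + 2r)/(4π‖y‖²)`. -/
theorem farfield_green_function_approximation
    (k : ℝ) (u y : EuclideanSpace ℝ (Fin 3)) (hu : ‖u‖ = 1)
    (r : ℝ) (hr : 0 < r) (hy : 2 * r ≤ ‖y‖) :
    ‖Complex.exp (Complex.I * (k : ℂ) * (‖y - r • u‖ : ℂ))
          / (4 * (Real.pi : ℂ) * (‖y - r • u‖ : ℂ))
        - Complex.exp (Complex.I * (k : ℂ) * (‖y‖ : ℂ))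
            * Complex.exp (-(Complex.I * (k : ℂ) * (r : ℂ) * ((⟪u, y⟫ : ℝ) / ‖y‖ : ℝ)))
            / (4 * (Real.pi : ℂ) * (‖y‖ : ℂ))‖
      ≤ (4 * |k| * r ^ 2 + 2 * r) / (4 * Real.pi * ‖y‖ ^ 2) := by
  have hb : 0 < ‖y‖ := by linarith
  have hba : |‖y‖ - ‖y - r • u‖| ≤ r := abs_norm_sub_norm_sub_smul_le hu hr.le y
  have hphase : Complex.exp (Complex.I * k * ‖y‖)
        * Complex.exp (-(Complex.I * k * r * ((⟪u, y⟫ / ‖y‖ : ℝ) : ℂ)))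
      = Complex.exp (Complex.I * k * ↑(‖y‖ - r * (⟪u, y⟫ / ‖y‖))) := by
    rw [← Complex.exp_add]; push_cast; ring_nf
  rw [hphase]
  have hlinear := abs_norm_sub_smul_sub_linear_approx_le hu hr hy
  refine (norm_exp_div_sub_exp_div_le_of_abs_sub_le k _ _ _ r hb
    (by linarith [abs_le.mp hba]) hba hlinear).trans ?_
  gcongr
  linarith [abs_nonneg k]
end
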